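/- Under the split Bregman iteration setting, suppose β* ∈ ℝ^p is a global minimizer of Φ(β) = V(β) + λ₁‖β‖₁ + λ₂‖Lβ‖₁, and let h* ∈ ∂V(β*), p* ∈ ∂‖·‖₁(β*), q* ∈ ∂‖·‖₁(Lβ*) satisfy h* + λ₁p* + λ₂Lᵀq* = 0. Set a* = β*, b* = Lβ*, u* = λ₁p*, v* = λ₂q*. Then every term ⟨h^{k+1} − h*, β^{k+1} − β*⟩ is nonnegative and the series is bounded: Σ_{k=0}^∞ ⟨h^{k+1} − h*, β^{k+1} − β*⟩ ≤ (1/(2δ₁))‖u^0 − u*‖₂² + (1/(2δ₂))‖v^0 − v*‖₂² + (μ₁/2)‖a^0 − a*‖₂² + (μ₂/2)‖b^0 − b*‖₂². -/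

import Mathlib

/-!
Measure the errors of the iterates against `(a*, b*, u*, v*) = (β*, Lβ*, λ₁p*, λ₂q*)` by
`E_k = ‖u^k − u*‖²/(2δ₁) + ‖v^k − v*‖²/(2δ₂) + μ₁/2 ‖a^k − a*‖² + μ₂/2 ‖b^k − b*‖²`.
Subtracting the optimality condition from the iteration, `E_k − E_{k+1}` exceeds
`⟨h^{k+1} − h*, β^{k+1} − β*⟩`: block by block the energy drop is an exact quadratic identity whose
remaining terms are nonnegative by monotonicity of `∂‖·‖₁` and by `δ ≤ μ`. The sum then
telescopes, and each term is nonnegative by monotonicity of `∂V`.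
-/

open Filter Matrix Finset

/-- The ℓ1 norm on `Fin d → ℝ`. -/
noncomputable def l1 {d : ℕ} (x : Fin d → ℝ) : ℝ := ∑ i, |x i|

/-- The Euclidean (ℓ2) norm on `Fin d → ℝ`. -/
noncomputable def l2 {d : ℕ} (x : Fin d → ℝ) : ℝ := Real.sqrt (∑ i, (x i) ^ 2)

/-- The Euclidean inner product on `Fin d → ℝ`. -/
def dotp {d : ℕ} (x y : Fin d → ℝ) : ℝ := ∑ i, x i * y i

/-- `g` is a subgradient of `f` at `x`. -/
def IsSubgrad {d : ℕ} (f : (Fin d → ℝ) → ℝ) (x g : Fin d → ℝ) : Prop :=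
  ∀ z, f z ≥ f x + dotp g (z - x)

lemma dotp_eq_dotProduct {d : ℕ} (x y : Fin d → ℝ) : dotp x y = x ⬝ᵥ y := rfl

lemma l2_sq {d : ℕ} (x : Fin d → ℝ) : l2 x ^ 2 = x ⬝ᵥ x := by
  rw [l2, Real.sq_sqrt (Finset.sum_nonneg fun i _ => sq_nonneg _)]
  simp only [dotProduct, sq]

lemma dotProduct_self_nonneg {n : Type*} [Fintype n] (x : n → ℝ) : 0 ≤ x ⬝ᵥ x :=
  Finset.sum_nonneg fun i _ => mul_self_nonneg (x i)

lemma IsSubgrad.sub_dotProduct_sub_nonneg {d : ℕ} {f : (Fin d → ℝ) → ℝ} {x₁ x₂ g₁ g₂ : Fin d → ℝ}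
    (h₁ : IsSubgrad f x₁ g₁) (h₂ : IsSubgrad f x₂ g₂) : 0 ≤ (g₁ - g₂) ⬝ᵥ (x₁ - x₂) := by
  have e₁ := h₁ x₂
  have e₂ := h₂ x₁
  simp only [ge_iff_le, dotp_eq_dotProduct, sub_dotProduct, dotProduct_sub] at e₁ e₂ ⊢
  linarith

lemma transpose_mulVec_dotProduct {m n : Type*} [Fintype m] [Fintype n]
    (L : Matrix m n ℝ) (w : m → ℝ) (x : n → ℝ) : Lᵀ *ᵥ w ⬝ᵥ x = w ⬝ᵥ L *ᵥ x := by
  rw [dotProduct_mulVec, mulVec_transpose]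

noncomputable def blockEnergy {n : Type*} [Fintype n] (δ μ : ℝ) (U A : n → ℝ) : ℝ :=
  1 / (2 * δ) * U ⬝ᵥ U + μ / 2 * A ⬝ᵥ A

lemma blockEnergy_nonneg {n : Type*} [Fintype n] {δ μ : ℝ} (hδ : 0 ≤ δ) (hμ : 0 ≤ μ)
    (U A : n → ℝ) : 0 ≤ blockEnergy δ μ U A := by
  unfold blockEnergy
  have := dotProduct_self_nonneg U
  have := dotProduct_self_nonneg A
  positivity

lemma blockEnergy_sub_eq {n : Type*} [Fintype n] {δ μ : ℝ} (hδ : δ ≠ 0) (x A₀ A₁ U₀ : n → ℝ) :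
    blockEnergy δ μ U₀ A₀ - blockEnergy δ μ (U₀ + δ • (x - A₁)) A₁
      = -(U₀ ⬝ᵥ x) - μ * ((x - A₀) ⬝ᵥ x) + (U₀ + μ • (x - A₁)) ⬝ᵥ A₁
        + μ / 2 * ((x - A₀) ⬝ᵥ (x - A₀)) + (μ - δ) / 2 * ((x - A₁) ⬝ᵥ (x - A₁)) := by
  unfold blockEnergy
  simp only [add_dotProduct, dotProduct_add, sub_dotProduct, dotProduct_sub, smul_dotProduct,
    dotProduct_smul, smul_eq_mul, dotProduct_comm A₁ x, dotProduct_comm A₀ x,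
    dotProduct_comm A₁ U₀, dotProduct_comm x U₀]
  field_simp
  ring

lemma blockEnergy_descent {n : Type*} [Fintype n] {δ μ : ℝ} (hδ : 0 < δ) (hδμ : δ ≤ μ)
    {x A₀ A₁ U₀ U₁ : n → ℝ} (hU : U₁ = U₀ + δ • (x - A₁))
    (hA : 0 ≤ (U₀ + μ • (x - A₁)) ⬝ᵥ A₁) :
    -(U₀ ⬝ᵥ x) - μ * ((x - A₀) ⬝ᵥ x) ≤ blockEnergy δ μ U₀ A₀ - blockEnergy δ μ U₁ A₁ := by
  rw [hU, blockEnergy_sub_eq hδ.ne']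
  have h₀ : 0 ≤ μ / 2 * ((x - A₀) ⬝ᵥ (x - A₀)) :=
    mul_nonneg (by linarith) (dotProduct_self_nonneg _)
  have h₁ : 0 ≤ (μ - δ) / 2 * ((x - A₁) ⬝ᵥ (x - A₁)) :=
    mul_nonneg (by linarith) (dotProduct_self_nonneg _)
  linarith

/-- One step of the iteration, with `P`, `Q` in the roles of `λ₁p^{k+1}`, `λ₂q^{k+1}` and
`(β', g', u', v')` in those of `(β*, h*, u*, v*)`. -/
lemma splitBregman_descent {ι κ : Type*} [Fintype ι] [Fintype κ] (L : Matrix κ ι ℝ)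
    {μ₁ μ₂ δ₁ δ₂ : ℝ} (hδ₁ : 0 < δ₁) (hδμ₁ : δ₁ ≤ μ₁) (hδ₂ : 0 < δ₂) (hδμ₂ : δ₂ ≤ μ₂)
    {β a₀ a₁ u₀ u₁ g P β' g' u' : ι → ℝ} {b₀ b₁ v₀ v₁ Q v' : κ → ℝ}
    (h₁ : 0 = g + u₀ + Lᵀ *ᵥ v₀ + μ₁ • (β - a₀) + μ₂ • Lᵀ *ᵥ (L *ᵥ β - b₀))
    (h₂ : P - u₀ + μ₁ • (a₁ - β) = 0)
    (h₃ : Q - v₀ + μ₂ • (b₁ - L *ᵥ β) = 0)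
    (h₄ : u₁ = u₀ + δ₁ • (β - a₁))
    (h₅ : v₁ = v₀ + δ₂ • (L *ᵥ β - b₁))
    (hopt : g' + u' + Lᵀ *ᵥ v' = 0)
    (hP : 0 ≤ (P - u') ⬝ᵥ (a₁ - β')) (hQ : 0 ≤ (Q - v') ⬝ᵥ (b₁ - L *ᵥ β')) :
    (g - g') ⬝ᵥ (β - β') ≤
      (blockEnergy δ₁ μ₁ (u₀ - u') (a₀ - β') + blockEnergy δ₂ μ₂ (v₀ - v') (b₀ - L *ᵥ β'))
        - (blockEnergy δ₁ μ₁ (u₁ - u') (a₁ - β') + blockEnergy δ₂ μ₂ (v₁ - v') (b₁ - L *ᵥ β')) := by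
  have hg : g - g' = -(u₀ - u') - Lᵀ *ᵥ (v₀ - v') - μ₁ • ((β - β') - (a₀ - β'))
      - μ₂ • Lᵀ *ᵥ (L *ᵥ (β - β') - (b₀ - L *ᵥ β')) := by
    simp only [mulVec_sub] at h₁ ⊢
    linear_combination (norm := module) -h₁ - hopt
  have hsplit : (g - g') ⬝ᵥ (β - β') =
      (-((u₀ - u') ⬝ᵥ (β - β')) - μ₁ * (((β - β') - (a₀ - β')) ⬝ᵥ (β - β')))
      + (-((v₀ - v') ⬝ᵥ L *ᵥ (β - β'))
        - μ₂ * ((L *ᵥ (β - β') - (b₀ - L *ᵥ β')) ⬝ᵥ L *ᵥ (β - β'))) := by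
    rw [hg]
    simp only [sub_dotProduct, neg_dotProduct, smul_dotProduct, smul_eq_mul,
      transpose_mulVec_dotProduct]
    ring
  have block₁ := blockEnergy_descent (x := β - β') (A₀ := a₀ - β') (A₁ := a₁ - β')
    (U₀ := u₀ - u') (U₁ := u₁ - u') hδ₁ hδμ₁
    (by rw [h₄]; module) (hP.trans_eq (by congr 1; linear_combination (norm := module) h₂))
  have block₂ := blockEnergy_descent (x := L *ᵥ (β - β')) (A₀ := b₀ - L *ᵥ β')
    (A₁ := b₁ - L *ᵥ β') (U₀ := v₀ - v') (U₁ := v₁ - v') hδ₂ hδμ₂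
    (by rw [h₅, mulVec_sub]; module)
    (hQ.trans_eq (by congr 1; rw [mulVec_sub]; linear_combination (norm := module) h₃))
  linarith

lemma sum_range_le_of_le_sub_succ {f E : ℕ → ℝ} (hE : ∀ k, 0 ≤ E k)
    (hf : ∀ k, f k ≤ E k - E (k + 1)) (K : ℕ) : ∑ k ∈ range K, f k ≤ E 0 := by
  have h := Finset.sum_le_sum fun k (_ : k ∈ range K) => hf k
  rw [Finset.sum_range_sub'] at h
  linarith [hE K]

theorem splitBregman_series_bound_general
    {p m : ℕ}
    (V : (Fin p → ℝ) → ℝ)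
    (L : Matrix (Fin m) (Fin p) ℝ)
    (lam1 lam2 mu1 mu2 del1 del2 : ℝ)
    (hlam1 : 0 < lam1) (hlam2 : 0 < lam2)
    (hmu1 : 0 < mu1) (hmu2 : 0 < mu2)
    (hdel1 : 0 < del1) (hdel1' : del1 ≤ mu1)
    (hdel2 : 0 < del2) (hdel2' : del2 ≤ mu2)
    (Beta a u h pp : ℕ → Fin p → ℝ)
    (b v qq : ℕ → Fin m → ℝ)
    (hh : ∀ k : ℕ, IsSubgrad V (Beta (k+1)) (h (k+1)))
    (hpp : ∀ k : ℕ, IsSubgrad l1 (a (k+1)) (pp (k+1)))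
    (hqq : ∀ k : ℕ, IsSubgrad l1 (b (k+1)) (qq (k+1)))
    (iter1 : ∀ k : ℕ, (0 : Fin p → ℝ) =
      h (k+1) + u k + L.transpose.mulVec (v k)
        + mu1 • (Beta (k+1) - a k)
        + mu2 • L.transpose.mulVec (L.mulVec (Beta (k+1)) - b k))
    (iter2 : ∀ k : ℕ, lam1 • pp (k+1) - u k + mu1 • (a (k+1) - Beta (k+1)) = 0)
    (iter3 : ∀ k : ℕ, lam2 • qq (k+1) - v k + mu2 • (b (k+1) - L.mulVec (Beta (k+1))) = 0)
    (iter4 : ∀ k : ℕ, u (k+1) = u k + del1 • (Beta (k+1) - a (k+1)))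
    (iter5 : ∀ k : ℕ, v (k+1) = v k + del2 • (L.mulVec (Beta (k+1)) - b (k+1)))
    (Bstar hstar pstar : Fin p → ℝ) (qstar : Fin m → ℝ)
    (hhs : IsSubgrad V Bstar hstar)
    (hps : IsSubgrad l1 Bstar pstar)
    (hqs : IsSubgrad l1 (L.mulVec Bstar) qstar)
    (hopt : hstar + lam1 • pstar + lam2 • L.transpose.mulVec qstar = 0) :
    (∀ k : ℕ, 0 ≤ dotp (h (k+1) - hstar) (Beta (k+1) - Bstar)) ∧
    (∀ K : ℕ, ∑ k ∈ Finset.range K, dotp (h (k+1) - hstar) (Beta (k+1) - Bstar)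
      ≤ (1 / (2 * del1)) * (l2 (u 0 - lam1 • pstar)) ^ 2
        + (1 / (2 * del2)) * (l2 (v 0 - lam2 • qstar)) ^ 2
        + (mu1 / 2) * (l2 (a 0 - Bstar)) ^ 2
        + (mu2 / 2) * (l2 (b 0 - L.mulVec Bstar)) ^ 2) := by
  refine ⟨fun k => (hh k).sub_dotProduct_sub_nonneg hhs, fun K => ?_⟩
  let E : ℕ → ℝ := fun j =>
    blockEnergy del1 mu1 (u j - lam1 • pstar) (a j - Bstar)
      + blockEnergy del2 mu2 (v j - lam2 • qstar) (b j - L *ᵥ Bstar)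
  have hE : ∀ j, 0 ≤ E j := fun j =>
    add_nonneg (blockEnergy_nonneg hdel1.le hmu1.le _ _)
      (blockEnergy_nonneg hdel2.le hmu2.le _ _)
  have hstep : ∀ k, dotp (h (k + 1) - hstar) (Beta (k + 1) - Bstar) ≤ E k - E (k + 1) := by
    intro k
    refine splitBregman_descent L hdel1 hdel1' hdel2 hdel2' (iter1 k) (iter2 k) (iter3 k)
      (iter4 k) (iter5 k) (by rwa [mulVec_smul]) ?_ ?_
    · rw [← smul_sub, smul_dotProduct, smul_eq_mul]
      exact mul_nonneg hlam1.le ((hpp k).sub_dotProduct_sub_nonneg hps)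
    · rw [← smul_sub, smul_dotProduct, smul_eq_mul]
      exact mul_nonneg hlam2.le ((hqq k).sub_dotProduct_sub_nonneg hqs)
  calc _ ≤ E 0 := sum_range_le_of_le_sub_succ hE hstep K
    _ = _ := by simp only [E, blockEnergy, l2_sq]; ring

/-- Nonnegativity of the Bregman-distance terms and boundedness of their series
along the split Bregman iteration. -/
theorem splitBregman_series_bound
    {p m : ℕ} (hp : 0 < p) (hm : 0 < m)
    (V : (Fin p → ℝ) → ℝ) (hV : ConvexOn ℝ Set.univ V)
    (L : Matrix (Fin m) (Fin p) ℝ)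
    (lam1 lam2 mu1 mu2 del1 del2 : ℝ)
    (hlam1 : 0 < lam1) (hlam2 : 0 < lam2)
    (hmu1 : 0 < mu1) (hmu2 : 0 < mu2)
    (hdel1 : 0 < del1) (hdel1' : del1 ≤ mu1)
    (hdel2 : 0 < del2) (hdel2' : del2 ≤ mu2)
    (Beta a u h pp : ℕ → Fin p → ℝ)
    (b v qq : ℕ → Fin m → ℝ)
    (hh : ∀ k : ℕ, IsSubgrad V (Beta (k+1)) (h (k+1)))
    (hpp : ∀ k : ℕ, IsSubgrad l1 (a (k+1)) (pp (k+1)))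
    (hqq : ∀ k : ℕ, IsSubgrad l1 (b (k+1)) (qq (k+1)))
    (iter1 : ∀ k : ℕ, (0 : Fin p → ℝ) =
      h (k+1) + u k + L.transpose.mulVec (v k)
        + mu1 • (Beta (k+1) - a k)
        + mu2 • L.transpose.mulVec (L.mulVec (Beta (k+1)) - b k))
    (iter2 : ∀ k : ℕ, lam1 • pp (k+1) - u k + mu1 • (a (k+1) - Beta (k+1)) = 0)
    (iter3 : ∀ k : ℕ, lam2 • qq (k+1) - v k + mu2 • (b (k+1) - L.mulVec (Beta (k+1))) = 0)
    (iter4 : ∀ k : ℕ, u (k+1) = u k + del1 • (Beta (k+1) - a (k+1)))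
    (iter5 : ∀ k : ℕ, v (k+1) = v k + del2 • (L.mulVec (Beta (k+1)) - b (k+1)))
    (Bstar hstar pstar : Fin p → ℝ) (qstar : Fin m → ℝ)
    (hmin : ∀ x : Fin p → ℝ,
      V Bstar + lam1 * l1 Bstar + lam2 * l1 (L.mulVec Bstar)
        ≤ V x + lam1 * l1 x + lam2 * l1 (L.mulVec x))
    (hhs : IsSubgrad V Bstar hstar)
    (hps : IsSubgrad l1 Bstar pstar)
    (hqs : IsSubgrad l1 (L.mulVec Bstar) qstar)
    (hopt : hstar + lam1 • pstar + lam2 • L.transpose.mulVec qstar = 0) :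
    (∀ k : ℕ, 0 ≤ dotp (h (k+1) - hstar) (Beta (k+1) - Bstar)) ∧
    (∀ K : ℕ, ∑ k ∈ Finset.range K, dotp (h (k+1) - hstar) (Beta (k+1) - Bstar)
      ≤ (1 / (2 * del1)) * (l2 (u 0 - lam1 • pstar)) ^ 2
        + (1 / (2 * del2)) * (l2 (v 0 - lam2 • qstar)) ^ 2
        + (mu1 / 2) * (l2 (a 0 - Bstar)) ^ 2
        + (mu2 / 2) * (l2 (b 0 - L.mulVec Bstar)) ^ 2) :=
  splitBregman_series_bound_general V L lam1 lam2 mu1 mu2 del1 del2 hlam1 hlam2 hmu1 hmu2 hdel1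
    hdel1' hdel2 hdel2' Beta a u h pp b v qq hh hpp hqq iter1 iter2 iter3 iter4 iter5 Bstar hstar
    pstar qstar hhs hps hqs hopt
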